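/- In the twisted group algebra A(S_n), for 1 ≤ a ≤ b ≤ n-1, conjugation by the full cycle holds: t_{b,a}* = t_{1,n} · t_{b+1,a+1}* · t_{n,1}, where t_{1,n}, t_{n,1} are the group-algebra elements (with trivial polynomial coefficient) of the n-cycles t_{1,n}: 1↦n, m↦m-1 (2 ≤ m ≤ n), and t_{n,1} = t_{1,n}⁻¹. -/
import Mathlib


open MvPolynomial

/-- The polynomial ring `R_n = ℂ[X_{ab} : 1 ≤ a,b ≤ n]` in `n²` commuting variables. -/
abbrev R (n : ℕ) : Type := MvPolynomial (Fin n × Fin n) ℂ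

/-- The action of `S_n` on `R_n`: `g.X_{ab} = X_{g(a) g(b)}`. -/
noncomputable def permAct {n : ℕ} (g : Equiv.Perm (Fin n)) (p : R n) : R n :=
  MvPolynomial.rename (fun ab => (g ab.1, g ab.2)) p

/-- The twisted group algebra `A(S_n) = R_n ⋊ ℂ[S_n]`, as formal `R_n`-linear
combinations of permutations. -/
abbrev A (n : ℕ) : Type := Equiv.Perm (Fin n) →₀ R n

/-- The identity element `id = 1·id` of `A(S_n)`. -/
noncomputable instance {n : ℕ} : One (A n) := ⟨Finsupp.single 1 1⟩

/-- The twisted multiplication `(p₁ g₁)·(p₂ g₂) = (p₁ · (g₁.p₂)) g₁g₂` on `A(S_n)`. -/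
noncomputable instance {n : ℕ} : Mul (A n) :=
  ⟨fun x y => x.sum fun g₁ p₁ => y.sum fun g₂ p₂ =>
    Finsupp.single (g₁ * g₂) (p₁ * permAct g₁ p₂)⟩

/-- The set of inversions `I(g) = {(a,b) : a < b, g(a) > g(b)}`. -/
def inversions {n : ℕ} (g : Equiv.Perm (Fin n)) : Finset (Fin n × Fin n) :=
  Finset.univ.filter fun ab => ab.1 < ab.2 ∧ g ab.2 < g ab.1

/-- The monomial `X_g = ∏_{(a,b) ∈ I(g⁻¹)} X_{ab}`. -/
noncomputable def Xg {n : ℕ} (g : Equiv.Perm (Fin n)) : R n :=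
  ∏ ab ∈ inversions g⁻¹, MvPolynomial.X ab

/-- The element `g* = X_g · g ∈ A(S_n)`. -/
noncomputable def gstar {n : ℕ} (g : Equiv.Perm (Fin n)) : A n :=
  Finsupp.single g (Xg g)

/-- The cycle `t_{k,j}` sending `m ↦ m+1` for `j ≤ m ≤ k-1` and `k ↦ j`,
fixing all points outside `[j,k]` (meaningful for `j ≤ k`). -/
def cyc {n : ℕ} [NeZero n] (k j : Fin n) : Equiv.Perm (Fin n) :=
  Equiv.permCongr (Equiv.addLeft j) (Fin.cycleRange (k - j))

/-! ### Auxiliary lemmas -/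

lemma cyc_apply_val {n : ℕ} (k j x : Fin (n+1)) (hjk : j ≤ k) :
    ((cyc k j x : Fin (n+1)) : ℕ) =
      if (x:ℕ) < (j:ℕ) then (x:ℕ) else if (x:ℕ) < (k:ℕ) then (x:ℕ)+1
        else if (x:ℕ) = (k:ℕ) then (j:ℕ) else (x:ℕ) := by
  have hd : ((k - j : Fin (n+1)) : ℕ) = (k:ℕ) - (j:ℕ) := Fin.coe_sub_iff_le.mpr hjk
  have hcyc : cyc k j x = j + Fin.cycleRange (k - j) (-j + x) := rfl
  rw [hcyc, neg_add_eq_sub]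
  rcases lt_or_ge (x:ℕ) (j:ℕ) with h1 | h1
  · have hxj : ((x - j : Fin (n+1)) : ℕ) = (n+1) + (x:ℕ) - (j:ℕ) :=
      Fin.coe_sub_iff_lt.mpr h1
    have hgt : (k - j) < (x - j) := by
      rw [Fin.lt_def, hd, hxj]; omega
    rw [Fin.cycleRange_of_gt hgt]
    simp only [add_sub_cancel]
    rw [if_pos h1]
  · have hle : j ≤ x := h1
    have hxj : ((x - j : Fin (n+1)) : ℕ) = (x:ℕ) - (j:ℕ) := Fin.coe_sub_iff_le.mpr hle
    rcases lt_or_ge (x:ℕ) (k:ℕ) with h2 | h2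
    · have hlt : (x - j) < (k - j) := by rw [Fin.lt_def, hd, hxj]; omega
      rw [Fin.cycleRange_of_lt hlt]
      rw [if_neg (by omega), if_pos h2]
      rw [← add_assoc]
      simp only [add_sub_cancel]
      rw [Fin.val_add_one_of_lt (by rw [Fin.lt_def]; simp; omega)]
    · rcases eq_or_lt_of_le h2 with h3 | h3
      · have : x - j = k - j := by
          apply Fin.ext; rw [hd, hxj]; omega
        rw [this, Fin.cycleRange_self, add_zero, if_neg (by omega), if_neg (by omega),
          if_pos (by omega)]
      · have hgt : (k - j) < (x - j) := by rw [Fin.lt_def, hd, hxj]; omega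
        rw [Fin.cycleRange_of_gt hgt]
        simp only [add_sub_cancel]
        rw [if_neg (by omega), if_neg (by omega), if_neg (by omega)]

lemma val_one_eq {n : ℕ} (hn : 1 ≤ n) : ((1 : Fin (n+1)) : ℕ) = 1 := by
  rw [Fin.val_one', Nat.mod_eq_of_lt (by omega)]

lemma sub_one_val {n : ℕ} (x : Fin (n+1)) (hx : 1 ≤ (x:ℕ)) :
    ((x - 1 : Fin (n+1)) : ℕ) = (x:ℕ) - 1 := by
  have hn : 1 ≤ n := by have := x.isLt; omega
  have h1 : ((1 : Fin (n+1)) : ℕ) = 1 := val_one_eq hn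
  have hle : (1 : Fin (n+1)) ≤ x := by rw [Fin.le_def, h1]; omega
  rw [Fin.coe_sub_iff_le.mpr hle, h1]

lemma cyc_inv_val {n : ℕ} (k j x : Fin (n+1)) (hjk : j ≤ k) :
    (((cyc k j)⁻¹ x : Fin (n+1)) : ℕ) =
      if (x:ℕ) < (j:ℕ) then (x:ℕ) else if (x:ℕ) = (j:ℕ) then (k:ℕ)
        else if (x:ℕ) ≤ (k:ℕ) then (x:ℕ)-1 else (x:ℕ) := by
  have key : (cyc k j)⁻¹ x =
      if (x:ℕ) < (j:ℕ) then x else if (x:ℕ) = (j:ℕ) then k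
        else if (x:ℕ) ≤ (k:ℕ) then x - 1 else x := by
    rw [Equiv.Perm.inv_eq_iff_eq]
    split_ifs with h1 h2 h3
    · symm; apply Fin.ext; rw [cyc_apply_val _ _ _ hjk]; split_ifs <;> omega
    · symm; apply Fin.ext; rw [cyc_apply_val _ _ _ hjk]; split_ifs <;> omega
    · symm; apply Fin.ext
      rw [cyc_apply_val _ _ _ hjk, sub_one_val x (by omega)]
      split_ifs <;> omega
    · symm; apply Fin.ext; rw [cyc_apply_val _ _ _ hjk]; split_ifs <;> omega
  rw [key]
  split_ifs with h1 h2 h3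
  · rfl
  · rfl
  · exact sub_one_val x (by omega)
  · rfl

lemma c_apply {n : ℕ} (x : Fin (n+1)) : cyc (Fin.last n) 0 x = x + 1 := by
  have h : cyc (Fin.last n) 0 x = (0:Fin (n+1)) + Fin.cycleRange (Fin.last n - 0) (-0 + x) := rfl
  rw [h]
  simp [Fin.cycleRange_last]

lemma c_inv_apply {n : ℕ} (x : Fin (n+1)) : (cyc (Fin.last n) 0)⁻¹ x = x - 1 := by
  rw [Equiv.Perm.inv_eq_iff_eq, c_apply, sub_add_cancel]

lemma inversions_cyc_inv {n : ℕ} (k j : Fin (n+1)) (hjk : j ≤ k) :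
    inversions (cyc k j)⁻¹ = (Finset.Ioc j k).image (fun y => (j, y)) := by
  ext ⟨p, q⟩
  simp only [inversions, Finset.mem_filter, Finset.mem_univ, true_and, Finset.mem_image,
    Finset.mem_Ioc, Prod.mk.injEq]
  constructor
  · rintro ⟨h1, h2⟩
    rw [Fin.lt_def] at h1 h2
    rw [cyc_inv_val _ _ _ hjk, cyc_inv_val _ _ _ hjk] at h2
    have hjk' : (j:ℕ) ≤ k := hjk
    refine ⟨q, ⟨?_, ?_⟩, ?_, rfl⟩
    · rw [Fin.lt_def]; split_ifs at h2 <;> omega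
    · rw [Fin.le_def]; split_ifs at h2 <;> omega
    · apply Fin.ext; split_ifs at h2 <;> omega
  · rintro ⟨y, ⟨hy1, hy2⟩, hp, hq⟩
    subst hp hq
    rw [Fin.lt_def] at hy1 ⊢
    rw [Fin.le_def] at hy2
    have hjk' : (j:ℕ) ≤ k := hjk
    refine ⟨hy1, ?_⟩
    rw [Fin.lt_def, cyc_inv_val _ _ _ hjk, cyc_inv_val _ _ _ hjk]
    split_ifs <;> omega

lemma Xg_cyc {n : ℕ} (k j : Fin (n+1)) (hjk : j ≤ k) :
    Xg (cyc k j) = ∏ y ∈ Finset.Ioc j k, MvPolynomial.X (j, y) := by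
  rw [Xg, inversions_cyc_inv _ _ hjk, Finset.prod_image]
  intro a _ b _ h
  exact (Prod.mk.injEq _ _ _ _).mp h |>.2

lemma conj_cyc {n : ℕ} (a b a1 b1 : Fin (n + 1)) (hab : a ≤ b)
    (hb : (b : ℕ) < n) (ha1 : (a1 : ℕ) = (a : ℕ) + 1) (hb1 : (b1 : ℕ) = (b : ℕ) + 1) :
    (cyc (Fin.last n) 0)⁻¹ * cyc b1 a1 * cyc (Fin.last n) 0 = cyc b a := by
  have hab' : (a:ℕ) ≤ b := hab
  have ha1b1 : a1 ≤ b1 := by rw [Fin.le_def]; omega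
  ext x
  rw [Equiv.Perm.mul_apply, Equiv.Perm.mul_apply, c_apply, c_inv_apply]
  rcases lt_or_eq_of_le (Nat.lt_succ_iff.mp x.isLt) with hx | hx
  · have hx1 : ((x + 1 : Fin (n+1)) : ℕ) = (x:ℕ) + 1 :=
      Fin.val_add_one_of_lt (by rw [Fin.lt_def, Fin.val_last]; omega)
    have hy := cyc_apply_val b1 a1 (x+1) ha1b1
    rw [hx1] at hy
    have hyge : 1 ≤ ((cyc b1 a1 (x+1) : Fin (n+1)) : ℕ) := by
      rw [hy]; split_ifs <;> omega
    rw [sub_one_val _ hyge, hy, cyc_apply_val b a x hab]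
    split_ifs <;> omega
  · have hx0 : (x + 1 : Fin (n+1)) = 0 := by
      apply Fin.ext
      rw [Fin.add_def, val_one_eq (by omega), Fin.val_zero]
      show ((x:ℕ) + 1) % (n+1) = 0
      rw [hx, Nat.mod_self]
    have h0 : cyc b1 a1 (x + 1) = 0 := by
      apply Fin.ext
      rw [hx0, cyc_apply_val b1 a1 0 ha1b1, Fin.val_zero]
      split_ifs <;> omega
    rw [h0]
    have h01 : ((0 - 1 : Fin (n+1)) : ℕ) = n := by
      rw [Fin.coe_sub_iff_lt.mpr (by rw [Fin.lt_def, Fin.val_zero, val_one_eq (by omega)]; omega),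
        Fin.val_zero, val_one_eq (by omega)]
      omega
    rw [h01, cyc_apply_val b a x hab]
    split_ifs <;> omega

lemma single_mul_single {n : ℕ} (g h : Equiv.Perm (Fin n)) (p q : R n) :
    (Finsupp.single g p * Finsupp.single h q : A n) =
      Finsupp.single (g * h) (p * permAct g q) := by
  show ((Finsupp.single g p).sum fun g₁ p₁ => (Finsupp.single h q).sum fun g₂ p₂ =>
    Finsupp.single (g₁ * g₂) (p₁ * permAct g₁ p₂)) = _
  rw [Finsupp.sum_single_index, Finsupp.sum_single_index]
  · simp [permAct]
  · simp [Finsupp.sum_single_index, permAct]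

lemma permAct_one {n : ℕ} (g : Equiv.Perm (Fin n)) : permAct g (1 : R n) = 1 := by
  simp [permAct]

/-- conjugation by the full cycle:
`t_{b,a}* = t_{1,n}·t_{b+1,a+1}*·t_{n,1}` for `1 ≤ a ≤ b ≤ n-1`, where `t_{n,1}`
is the full cycle `m↦m+1`, `n↦1`, `t_{1,n} = t_{n,1}⁻¹`, both taken with trivial
polynomial coefficient. -/
theorem cycle_conjugation {n : ℕ} (a b a1 b1 : Fin (n + 1)) (hab : a ≤ b)
    (hb : (b : ℕ) < n) (ha1 : (a1 : ℕ) = (a : ℕ) + 1) (hb1 : (b1 : ℕ) = (b : ℕ) + 1) :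
    gstar (cyc b a) =
      (Finsupp.single ((cyc (Fin.last n) 0)⁻¹) (1 : R (n + 1)) : A (n + 1)) *
        gstar (cyc b1 a1) *
        Finsupp.single (cyc (Fin.last n) 0) (1 : R (n + 1)) := by
  have hab' : (a:ℕ) ≤ b := hab
  have ha1b1 : a1 ≤ b1 := by rw [Fin.le_def]; omega
  have ha1f : a1 = a + 1 := by
    apply Fin.ext
    rw [ha1, Fin.val_add_one_of_lt (by rw [Fin.lt_def, Fin.val_last]; omega)]
  have hb1f : b1 = b + 1 := by
    apply Fin.ext
    rw [hb1, Fin.val_add_one_of_lt (by rw [Fin.lt_def, Fin.val_last]; omega)]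
  have hXg : permAct (cyc (Fin.last n) 0)⁻¹ (Xg (cyc b1 a1)) = Xg (cyc b a) := by
    rw [Xg_cyc b1 a1 ha1b1, Xg_cyc b a hab, permAct, map_prod]
    have himg : Finset.Ioc a1 b1 = (Finset.Ioc a b).image (fun y => y + 1) := by
      ext y
      simp only [Finset.mem_Ioc, Finset.mem_image]
      constructor
      · rintro ⟨h1, h2⟩
        rw [Fin.lt_def] at h1
        rw [Fin.le_def] at h2
        have hy1 : 1 ≤ (y:ℕ) := by omega
        refine ⟨y - 1, ⟨?_, ?_⟩, ?_⟩
        · rw [Fin.lt_def, sub_one_val y hy1]; omega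
        · rw [Fin.le_def, sub_one_val y hy1]; omega
        · rw [sub_add_cancel]
      · rintro ⟨z, ⟨h1, h2⟩, rfl⟩
        rw [Fin.lt_def] at h1
        rw [Fin.le_def] at h2
        have hz1 : ((z + 1 : Fin (n+1)) : ℕ) = (z:ℕ) + 1 :=
          Fin.val_add_one_of_lt (by rw [Fin.lt_def, Fin.val_last]; omega)
        constructor
        · rw [Fin.lt_def, hz1]; omega
        · rw [Fin.le_def, hz1]; omega
    rw [himg, Finset.prod_image (by intro u _ v _ h; exact add_right_cancel h)]
    apply Finset.prod_congr rfl
    intro y hy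
    rw [rename_X]
    show MvPolynomial.X ((cyc (Fin.last n) 0)⁻¹ a1, (cyc (Fin.last n) 0)⁻¹ (y + 1)) = _
    rw [c_inv_apply, c_inv_apply, ha1f, add_sub_cancel_right, add_sub_cancel_right]
  rw [gstar, gstar, single_mul_single, single_mul_single, permAct_one, one_mul, mul_one,
    conj_cyc a b a1 b1 hab hb ha1 hb1, hXg]
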